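/- arXiv:2602.19783 — 2 statements merged into one kernel-verified Lean document; each statement's English description precedes it below -/
import Mathlib

section
/- Let μ > 0, σ > 0, b ∈ ℝ and φ > 1. Then the expected CRRA utility V(c) = (1/(1−φ))·exp((1−φ)·(c·μ + b) + (1/2)·(1−φ)²·c²·σ²), viewed as a function of the technology level c ∈ ℝ, attains its unique global maximum at c* = μ/((φ−1)·σ²); in particular V is strictly increasing on (−∞, c*] and strictly decreasing on [c*, ∞). (Second half of Proposition 3: for relative risk aversion above one there exists an ex-ante optimal technological plateau.) -/
/-!
Completing the square, the exponent is `(1-φ)²σ²/2 · (c - c*)² + const`, so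
`V c = G ((c - c*)²)` with `G s = (1/(1-φ)) · exp (k s + const)`, `k > 0`. For `φ > 1` the factor
`1/(1-φ)` is negative, so `G` is strictly decreasing, and `V` peaks where `(c - c*)²` is smallest.
-/

open Real Set

lemma strictAntiOn_sq_sub_Iic (c₀ : ℝ) : StrictAntiOn (fun c : ℝ => (c - c₀) ^ 2) (Iic c₀) :=
  fun x hx y hy hxy => by
    simp only [mem_Iic] at hx hy
    nlinarith

lemma strictMonoOn_sq_sub_Ici (c₀ : ℝ) : StrictMonoOn (fun c : ℝ => (c - c₀) ^ 2) (Ici c₀) :=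
  fun x hx y hy hxy => by
    simp only [mem_Ici] at hx hy
    nlinarith

section PeakOfStrictAnti

variable {G : ℝ → ℝ} {c₀ : ℝ}

lemma StrictAnti.comp_sq_sub_lt (hG : StrictAnti G) {c : ℝ} (hc : c ≠ c₀) :
    G ((c - c₀) ^ 2) < G ((c₀ - c₀) ^ 2) :=
  hG (by rw [sub_self, zero_pow two_ne_zero]; exact sq_pos_iff.2 (sub_ne_zero.2 hc))

lemma StrictAnti.strictMonoOn_comp_sq_sub (hG : StrictAnti G) :
    StrictMonoOn (fun c => G ((c - c₀) ^ 2)) (Iic c₀) :=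
  hG.comp_strictAntiOn (strictAntiOn_sq_sub_Iic c₀)

lemma StrictAnti.strictAntiOn_comp_sq_sub (hG : StrictAnti G) :
    StrictAntiOn (fun c => G ((c - c₀) ^ 2)) (Ici c₀) :=
  hG.comp_strictMonoOn (strictMonoOn_sq_sub_Ici c₀)

end PeakOfStrictAnti

lemma crra_exponent_eq_sq_sub (μ σ b φ c : ℝ) (hσ : σ ≠ 0) (hφ : φ ≠ 1) :
    (1 - φ) * (c * μ + b) + (1 - φ) ^ 2 * c ^ 2 * σ ^ 2 / 2 =
      (1 - φ) ^ 2 * σ ^ 2 / 2 * (c - μ / ((φ - 1) * σ ^ 2)) ^ 2 +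
        ((1 - φ) * b - μ ^ 2 / (2 * σ ^ 2)) := by
  have : φ - 1 ≠ 0 := sub_ne_zero.2 hφ
  field_simp
  ring

lemma strictAnti_neg_mul_exp_affine {a k : ℝ} (ha : a < 0) (hk : 0 < k) (d : ℝ) :
    StrictAnti fun s : ℝ => a * exp (k * s + d) :=
  (exp_strictMono.comp ((strictMono_mul_left_of_pos hk).add_const d)).const_mul_of_neg ha

theorem optimal_technological_plateau_general (μ σ b φ : ℝ) (hσ : 0 < σ)
    (hφ : 1 < φ) :
    (∀ c : ℝ, c ≠ μ / ((φ - 1) * σ ^ 2) →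
      (1 / (1 - φ)) *
          Real.exp ((1 - φ) * (c * μ + b) + (1 - φ) ^ 2 * c ^ 2 * σ ^ 2 / 2) <
        (1 / (1 - φ)) *
          Real.exp ((1 - φ) * ((μ / ((φ - 1) * σ ^ 2)) * μ + b) +
            (1 - φ) ^ 2 * (μ / ((φ - 1) * σ ^ 2)) ^ 2 * σ ^ 2 / 2)) ∧
    StrictMonoOn
      (fun c : ℝ => (1 / (1 - φ)) *
        Real.exp ((1 - φ) * (c * μ + b) + (1 - φ) ^ 2 * c ^ 2 * σ ^ 2 / 2))
      (Iic (μ / ((φ - 1) * σ ^ 2))) ∧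
    StrictAntiOn
      (fun c : ℝ => (1 / (1 - φ)) *
        Real.exp ((1 - φ) * (c * μ + b) + (1 - φ) ^ 2 * c ^ 2 * σ ^ 2 / 2))
      (Ici (μ / ((φ - 1) * σ ^ 2))) := by
  have hG : StrictAnti fun s => (1 / (1 - φ)) *
      exp ((1 - φ) ^ 2 * σ ^ 2 / 2 * s + ((1 - φ) * b - μ ^ 2 / (2 * σ ^ 2))) :=
    strictAnti_neg_mul_exp_affine (one_div_neg.2 (sub_neg.2 hφ))
      (by have := sub_ne_zero.2 hφ.ne; positivity) _
  simp only [crra_exponent_eq_sq_sub μ σ b φ _ hσ.ne' hφ.ne']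
  exact ⟨fun c hc => hG.comp_sq_sub_lt hc, hG.strictMonoOn_comp_sq_sub, hG.strictAntiOn_comp_sq_sub⟩

/-- Second half of Proposition 3: for relative risk aversion `φ > 1`, the expected CRRA
utility `V(c) = (1/(1-φ)) * exp ((1-φ)(c μ + b) + (1-φ)² c² σ² / 2)` attains its unique
global maximum at the technological plateau `c* = μ / ((φ - 1) σ²)`; `V` is strictly
increasing on `(-∞, c*]` and strictly decreasing on `[c*, ∞)`. -/
theorem optimal_technological_plateau (μ σ b φ : ℝ) (hμ : 0 < μ) (hσ : 0 < σ)
    (hφ : 1 < φ) :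
    (∀ c : ℝ, c ≠ μ / ((φ - 1) * σ ^ 2) →
      (1 / (1 - φ)) *
          Real.exp ((1 - φ) * (c * μ + b) + (1 - φ) ^ 2 * c ^ 2 * σ ^ 2 / 2) <
        (1 / (1 - φ)) *
          Real.exp ((1 - φ) * ((μ / ((φ - 1) * σ ^ 2)) * μ + b) +
            (1 - φ) ^ 2 * (μ / ((φ - 1) * σ ^ 2)) ^ 2 * σ ^ 2 / 2)) ∧
    StrictMonoOn
      (fun c : ℝ => (1 / (1 - φ)) *
        Real.exp ((1 - φ) * (c * μ + b) + (1 - φ) ^ 2 * c ^ 2 * σ ^ 2 / 2))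
      (Iic (μ / ((φ - 1) * σ ^ 2))) ∧
    StrictAntiOn
      (fun c : ℝ => (1 / (1 - φ)) *
        Real.exp ((1 - φ) * (c * μ + b) + (1 - φ) ^ 2 * c ^ 2 * σ ^ 2 / 2))
      (Ici (μ / ((φ - 1) * σ ^ 2))) :=
  optimal_technological_plateau_general μ σ b φ hσ hφ
end

section
/- Let σ > 0, μ > 0, b₁, b₂ ∈ ℝ, and 0 < c₁ < c₂. For φ > 1, define the expected utilities V_j(φ) = (1/(1−φ))·exp((1−φ)·(c_j·μ + b_j) + (1/2)·(1−φ)²·c_j²·σ²) for j = 1, 2, and define the cutoff φ* = [ (c₂−c₁)·μ + b₂−b₁ + (1/2)·(c₂²−c₁²)·σ² ] / [ (1/2)·(c₂²−c₁²)·σ² ]. Then for all φ > 1: V₂(φ) < V₁(φ) if and only if φ > φ*, and V₂(φ) = V₁(φ) if and only if φ = φ*. (Appendix A of the paper: agents with relative risk aversion above the cutoff φ* prefer the earlier income distribution despite lower mean income.) -/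
open Real

/-- Appendix A: with expected utilities
`V_j(φ) = (1/(1-φ)) * exp ((1-φ)(c_j μ + b_j) + (1-φ)² c_j² σ² / 2)` for two income
distributions `(c₁, b₁)` and `(c₂, b₂)` with `0 < c₁ < c₂`, and cutoff
`φ* = ((c₂ - c₁) μ + b₂ - b₁ + (c₂² - c₁²) σ² / 2) / ((c₂² - c₁²) σ² / 2)`,
for every `φ > 1`: `V₂(φ) < V₁(φ)` iff `φ > φ*`, and `V₂(φ) = V₁(φ)` iff `φ = φ*`. -/
theorem risk_aversion_cutoff (σ μ b₁ b₂ c₁ c₂ : ℝ) (hσ : 0 < σ) (hμ : 0 < μ)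
    (hc₁ : 0 < c₁) (hc : c₁ < c₂) :
    ∀ φ : ℝ, 1 < φ →
      (((1 / (1 - φ)) *
          Real.exp ((1 - φ) * (c₂ * μ + b₂) + (1 - φ) ^ 2 * c₂ ^ 2 * σ ^ 2 / 2) <
        (1 / (1 - φ)) *
          Real.exp ((1 - φ) * (c₁ * μ + b₁) + (1 - φ) ^ 2 * c₁ ^ 2 * σ ^ 2 / 2)) ↔
        ((c₂ - c₁) * μ + b₂ - b₁ + (c₂ ^ 2 - c₁ ^ 2) * σ ^ 2 / 2) /
            ((c₂ ^ 2 - c₁ ^ 2) * σ ^ 2 / 2) < φ) ∧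
      (((1 / (1 - φ)) *
          Real.exp ((1 - φ) * (c₂ * μ + b₂) + (1 - φ) ^ 2 * c₂ ^ 2 * σ ^ 2 / 2) =
        (1 / (1 - φ)) *
          Real.exp ((1 - φ) * (c₁ * μ + b₁) + (1 - φ) ^ 2 * c₁ ^ 2 * σ ^ 2 / 2)) ↔
        φ = ((c₂ - c₁) * μ + b₂ - b₁ + (c₂ ^ 2 - c₁ ^ 2) * σ ^ 2 / 2) /
            ((c₂ ^ 2 - c₁ ^ 2) * σ ^ 2 / 2)) := by
  intro φ hφ
  have ht : 0 < φ - 1 := by linarith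
  have hD : 0 < (c₂ ^ 2 - c₁ ^ 2) * σ ^ 2 / 2 := by nlinarith [pow_pos hσ 2, mul_pos (mul_pos (sub_pos.mpr hc) (by linarith : (0:ℝ) < c₂ + c₁)) (pow_pos hσ 2)]
  have hinv : 1 / (1 - φ) < 0 := by
    apply div_neg_of_pos_of_neg one_pos; linarith
  constructor
  · rw [mul_lt_mul_left_of_neg hinv, Real.exp_lt_exp, div_lt_iff₀ hD]
    constructor
    · intro h; nlinarith
    · intro h; nlinarith
  · rw [mul_right_inj' hinv.ne, Real.exp_eq_exp, eq_div_iff hD.ne']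
    constructor
    · intro h; nlinarith
    · intro h; nlinarith
end
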